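/- arXiv:1502.05746 — 3 statements merged into one kernel-verified Lean document; each statement's English description precedes it below -/
import Mathlib

section
/- Let M be a p×p positive semidefinite matrix of rank d such that 1 - δ₁ ≤ M_{ii} ≤ 1 for all i and |M_{ij}| ≤ δ₂ for all i ≠ j, where 0 < δ₁, δ₂ < 1. Then d ≥ p(1-δ₁)² / (1 + (p-1)δ₂²). -/
/-!
Write `λᵢ` for the eigenvalues of `M`. Exactly `d` of them are nonzero, so Cauchy–Schwarz gives
`(tr M)² = (∑ λᵢ)² ≤ d ∑ λᵢ² = d tr(M²)`. The diagonal bounds give `tr M ≥ p (1 - δ₁)`, and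
expanding `tr(M²) = ∑ᵢⱼ Mᵢⱼ²` with the entry bounds gives `tr(M²) ≤ p (1 + (p - 1) δ₂²)`.
-/

open Matrix Finset

theorem Finset.sq_sum_le_card_filter_ne_zero_mul_sum_sq {ι α : Type*} [Semiring α] [LinearOrder α]
    [IsStrictOrderedRing α] [ExistsAddOfLE α] (s : Finset ι) (f : ι → α) :
    (∑ i ∈ s, f i) ^ 2 ≤ #{i ∈ s | f i ≠ 0} * ∑ i ∈ s, f i ^ 2 := by
  rw [← sum_filter_ne_zero]
  calc (∑ i ∈ {i ∈ s | f i ≠ 0}, f i) ^ 2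
      ≤ #{i ∈ s | f i ≠ 0} * ∑ i ∈ {i ∈ s | f i ≠ 0}, f i ^ 2 := sq_sum_le_card_mul_sum_sq
    _ ≤ #{i ∈ s | f i ≠ 0} * ∑ i ∈ s, f i ^ 2 := by
      gcongr
      · exact fun i _ _ => sq_nonneg (f i)
      · exact filter_subset _ s

namespace Matrix.IsHermitian

variable {n : Type*} [Fintype n] [DecidableEq n]

theorem trace_mul_self_eq_sum_eigenvalues_sq {𝕜 : Type*} [RCLike 𝕜] {A : Matrix n n 𝕜}
    (hA : A.IsHermitian) : (A * A).trace = ∑ i, (hA.eigenvalues i : 𝕜) ^ 2 := by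
  conv_lhs => rw [hA.spectral_theorem, ← map_mul, Unitary.conjStarAlgAut_apply, trace_mul_cycle,
    Unitary.coe_star_mul_self, one_mul, diagonal_mul_diagonal, trace_diagonal]
  simp [sq]

theorem trace_sq_le_rank_mul_trace_mul_self {A : Matrix n n ℝ} (hA : A.IsHermitian) :
    A.trace ^ 2 ≤ A.rank * (A * A).trace := by
  rw [hA.trace_eq_sum_eigenvalues, hA.trace_mul_self_eq_sum_eigenvalues_sq,
    hA.rank_eq_card_non_zero_eigs, Fintype.card_subtype]
  simpa using sq_sum_le_card_filter_ne_zero_mul_sum_sq univ hA.eigenvalues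

end Matrix.IsHermitian

structure Matrix.IsNearIdentity {n : Type*} (δ₁ δ₂ : ℝ) (M : Matrix n n ℝ) : Prop where
  one_sub_le_diag : ∀ i, 1 - δ₁ ≤ M i i
  diag_le_one : ∀ i, M i i ≤ 1
  abs_le_of_ne : ∀ i j, i ≠ j → |M i j| ≤ δ₂

namespace Matrix.IsNearIdentity

variable {n : Type*} [Fintype n] {δ₁ δ₂ : ℝ} {M : Matrix n n ℝ}

theorem card_mul_one_sub_le_trace (hM : M.IsNearIdentity δ₁ δ₂) :
    Fintype.card n * (1 - δ₁) ≤ M.trace :=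
  calc Fintype.card n * (1 - δ₁) = ∑ _i : n, (1 - δ₁) := by simp [mul_sub]
    _ ≤ M.trace := sum_le_sum fun i _ => hM.one_sub_le_diag i

theorem mul_self_apply_self_le (hM : M.IsNearIdentity δ₁ δ₂) (hsymm : M.IsSymm) (hδ₁ : δ₁ ≤ 1)
    (i : n) : (M * M) i i ≤ 1 + (Fintype.card n - 1) * δ₂ ^ 2 := by
  classical
  have hdiag_sq : M i i ^ 2 ≤ 1 := by
    have := hM.one_sub_le_diag i
    have := hM.diag_le_one i
    nlinarith
  have hoff_sq : ∑ j ∈ univ.erase i, M i j ^ 2 ≤ (Fintype.card n - 1) * δ₂ ^ 2 :=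
    calc ∑ j ∈ univ.erase i, M i j ^ 2 ≤ ∑ _j ∈ univ.erase i, δ₂ ^ 2 := by
          refine sum_le_sum fun j hj => ?_
          rw [← sq_abs]
          exact pow_le_pow_left₀ (abs_nonneg _) (hM.abs_le_of_ne i j (ne_of_mem_erase hj).symm) 2
      _ = (Fintype.card n - 1) * δ₂ ^ 2 := by
          rw [sum_const, card_erase_of_mem (mem_univ i), nsmul_eq_mul, card_univ,
            Nat.cast_pred (Fintype.card_pos_iff.mpr ⟨i⟩)]
  calc (M * M) i i = M i i ^ 2 + ∑ j ∈ univ.erase i, M i j ^ 2 := by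
        rw [mul_apply, ← add_sum_erase _ _ (mem_univ i)]
        simp only [hsymm.apply, sq]
    _ ≤ 1 + (Fintype.card n - 1) * δ₂ ^ 2 := add_le_add hdiag_sq hoff_sq

theorem trace_mul_self_le (hM : M.IsNearIdentity δ₁ δ₂) (hsymm : M.IsSymm) (hδ₁ : δ₁ ≤ 1) :
    (M * M).trace ≤ Fintype.card n * (1 + (Fintype.card n - 1) * δ₂ ^ 2) :=
  calc (M * M).trace ≤ ∑ _i : n, (1 + (Fintype.card n - 1) * δ₂ ^ 2) :=
        sum_le_sum fun i _ => hM.mul_self_apply_self_le hsymm hδ₁ i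
    _ = Fintype.card n * (1 + (Fintype.card n - 1) * δ₂ ^ 2) := by simp [mul_add]

end Matrix.IsNearIdentity

theorem near_identity_rank_bound_general (p d : ℕ) (δ₁ δ₂ : ℝ)
    (hδ₁' : δ₁ < 1)
    (M : Matrix (Fin p) (Fin p) ℝ) (hM : M.PosSemidef)
    (hrank : M.rank = d)
    (hdiag : ∀ i, 1 - δ₁ ≤ M i i ∧ M i i ≤ 1)
    (hoff : ∀ i j, i ≠ j → |M i j| ≤ δ₂) :
    (d : ℝ) ≥ p * (1 - δ₁)^2 / (1 + (p - 1) * δ₂^2) := by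
  rcases Nat.eq_zero_or_pos p with rfl | hp
  · simp
  have hnear : M.IsNearIdentity δ₁ δ₂ := ⟨fun i => (hdiag i).1, fun i => (hdiag i).2, hoff⟩
  have htrace := hnear.card_mul_one_sub_le_trace
  have htrace_sq := hnear.trace_mul_self_le (isHermitian_iff_isSymm.mp hM.1) hδ₁'.le
  have hrank_le := hM.1.trace_sq_le_rank_mul_trace_mul_self
  rw [Fintype.card_fin] at htrace htrace_sq
  rw [hrank] at hrank_le
  have hp_pos : (0 : ℝ) < p := by exact_mod_cast hp
  have hden : 0 < 1 + ((p : ℝ) - 1) * δ₂ ^ 2 := by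
    have : (1 : ℝ) ≤ p := by exact_mod_cast hp
    positivity
  rw [ge_iff_le, div_le_iff₀ hden]
  refine le_of_mul_le_mul_left ?_ hp_pos
  calc (p : ℝ) * (p * (1 - δ₁) ^ 2) = (p * (1 - δ₁)) ^ 2 := by ring
    _ ≤ M.trace ^ 2 := by gcongr
    _ ≤ d * (M * M).trace := hrank_le
    _ ≤ d * (p * (1 + (p - 1) * δ₂ ^ 2)) := by gcongr
    _ = p * (d * (1 + (p - 1) * δ₂ ^ 2)) := by ring

theorem near_identity_rank_bound (p d : ℕ) (δ₁ δ₂ : ℝ)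
    (hδ₁ : 0 < δ₁) (hδ₁' : δ₁ < 1) (hδ₂ : 0 < δ₂) (hδ₂' : δ₂ < 1)
    (M : Matrix (Fin p) (Fin p) ℝ) (hM : M.PosSemidef)
    (hrank : M.rank = d)
    (hdiag : ∀ i, 1 - δ₁ ≤ M i i ∧ M i i ≤ 1)
    (hoff : ∀ i j, i ≠ j → |M i j| ≤ δ₂) :
    (d : ℝ) ≥ p * (1 - δ₁)^2 / (1 + (p - 1) * δ₂^2) :=
  near_identity_rank_bound_general p d δ₁ δ₂ hδ₁' M hM hrank hdiag hoff
end

section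
/- Let M be a p×p real matrix of rank d, and let P be a polynomial of degree k. Define N to be the p×p matrix with entries N_{ij} = P(M_{ij}) (entrywise application of P). Then rank(N) ≤ binomial(k+d, k). -/
open Finset

section Span

variable {p d : ℕ} (v : Fin d → Fin p → ℝ)

/-- exponent vectors of total degree at most m -/
noncomputable def expSet (d m : ℕ) : Finset (Fin d → ℕ) :=
  (Fintype.piFinset fun _ : Fin d => Finset.range (m+1)).filter (fun t => ∑ l, t l ≤ m)

lemma mem_expSet {d m : ℕ} {t : Fin d → ℕ} (h : ∑ l, t l ≤ m) : t ∈ expSet d m := by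
  classical
  refine Finset.mem_filter.mpr ⟨Fintype.mem_piFinset.mpr fun l => ?_, h⟩
  exact Finset.mem_range.mpr (Nat.lt_succ_of_le
    (le_trans (Finset.single_le_sum (fun i _ => Nat.zero_le _) (Finset.mem_univ l)) h))

lemma sum_le_of_mem_expSet {d m : ℕ} {t : Fin d → ℕ} (h : t ∈ expSet d m) : ∑ l, t l ≤ m :=
  (Finset.mem_filter.mp h).2

/-- monomial functions -/
noncomputable def mono (v : Fin d → Fin p → ℝ) (t : Fin d → ℕ) : Fin p → ℝ :=
  fun j => ∏ l, v l j ^ t l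

noncomputable def monoSpan (v : Fin d → Fin p → ℝ) (m : ℕ) : Submodule ℝ (Fin p → ℝ) :=
  Submodule.span ℝ (↑((expSet d m).image (mono v)) : Set (Fin p → ℝ))

lemma monoSpan_mono {m₁ m₂ : ℕ} (h : m₁ ≤ m₂) : monoSpan v m₁ ≤ monoSpan v m₂ := by
  apply Submodule.span_mono
  apply Finset.coe_subset.mpr
  apply Finset.image_subset_image
  intro t ht
  exact mem_expSet (le_trans (sum_le_of_mem_expSet ht) h)

lemma mono_mem_monoSpan {m : ℕ} {t : Fin d → ℕ} (h : ∑ l, t l ≤ m) :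
    mono v t ∈ monoSpan v m :=
  Submodule.subset_span (Finset.mem_coe.mpr (Finset.mem_image_of_mem _ (mem_expSet h)))

lemma mul_mem_monoSpan (l : Fin d) {m : ℕ} {g : Fin p → ℝ}
    (hg : g ∈ monoSpan v m) : (fun j => v l j * g j) ∈ monoSpan v (m+1) := by
  classical
  induction hg using Submodule.span_induction with
  | mem x hx =>
    obtain ⟨t, ht, rfl⟩ := Finset.mem_image.mp (Finset.mem_coe.mp hx)
    have key : (fun j => v l j * mono v t j) = mono v (Function.update t l (t l + 1)) := by
      funext j
      simp only [mono]
      rw [← Finset.mul_prod_erase Finset.univ (fun l' => v l' j ^ t l') (Finset.mem_univ l),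
        ← Finset.mul_prod_erase Finset.univ
          (fun l' => v l' j ^ (Function.update t l (t l + 1)) l') (Finset.mem_univ l)]
      have h2 : ∏ x ∈ Finset.univ.erase l, v x j ^ (Function.update t l (t l + 1)) x
          = ∏ x ∈ Finset.univ.erase l, v x j ^ t x :=
        Finset.prod_congr rfl fun x hx => by
          rw [Function.update_of_ne (Finset.mem_erase.mp hx).1]
      rw [h2, Function.update_self, pow_succ]
      ring
    rw [key]
    apply mono_mem_monoSpan
    have hsum : ∑ l', Function.update t l (t l + 1) l' = (∑ l', t l') + 1 := by
      rw [Finset.sum_update_of_mem (Finset.mem_univ l), Finset.sdiff_singleton_eq_erase,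
        ← Finset.add_sum_erase Finset.univ t (Finset.mem_univ l)]
      ring
    rw [hsum]
    exact Nat.succ_le_succ (sum_le_of_mem_expSet ht)
  | zero =>
    have : (fun j => v l j * (0 : Fin p → ℝ) j) = 0 := by funext j; simp
    rw [this]; exact (monoSpan v (m+1)).zero_mem
  | add x y hx hy ihx ihy =>
    have : (fun j => v l j * (x + y) j) = (fun j => v l j * x j) + fun j => v l j * y j := by
      funext j; simp [mul_add]
    rw [this]; exact Submodule.add_mem _ ihx ihy
  | smul c x hx ihx =>
    have : (fun j => v l j * (c • x) j) = c • fun j => v l j * x j := by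
      funext j; simp [Pi.smul_apply, smul_eq_mul]; ring
    rw [this]; exact Submodule.smul_mem _ c ihx

lemma pow_mem_monoSpan (a : Fin d → ℝ) (m : ℕ) :
    (fun j => (∑ l, a l * v l j) ^ m) ∈ monoSpan v m := by
  induction m with
  | zero =>
    have : (fun _ : Fin p => (1:ℝ)) = mono v (fun _ => 0) := by
      funext j; simp [mono]
    simpa [this] using mono_mem_monoSpan v (t := fun _ => 0) (m := 0) (by simp)
  | succ m ih =>
    have key : (fun j => (∑ l, a l * v l j) ^ (m+1)) =
        ∑ l, a l • (fun j => v l j * (∑ l', a l' * v l' j) ^ m) := by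
      funext j
      rw [pow_succ']
      simp only [Finset.sum_apply, Pi.smul_apply, smul_eq_mul, Finset.sum_mul]
      exact Finset.sum_congr rfl fun l _ => by ring
    rw [key]
    exact Submodule.sum_mem _ fun l _ =>
      Submodule.smul_mem _ _ (mul_mem_monoSpan v l ih)

end Span

lemma card_exponents (d k : ℕ) :
    ((Fintype.piFinset fun _ : Fin d => Finset.range (k+1)).filter
      (fun t => ∑ l, t l ≤ k)).card ≤ (k + d).choose k := by
  classical
  set S := (Fintype.piFinset fun _ : Fin d => Finset.range (k+1)).filter
      (fun t => ∑ l, t l ≤ k) with hS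
  have key : S.card ≤ Fintype.card (Sym (Fin (d+1)) k) := by
    set f : (Fin d → ℕ) → Multiset (Fin (d+1)) := fun t =>
      (∑ l, Multiset.replicate (t l) (Fin.castSucc l)) +
        Multiset.replicate (k - ∑ l, t l) (Fin.last d) with hf
    have hcount : ∀ t (l : Fin d), (f t).count (Fin.castSucc l) = t l := by
      intro t l
      have hne : Fin.castSucc l ≠ Fin.last d := (Fin.castSucc_lt_last l).ne
      simp [hf, Multiset.count_replicate, Multiset.count_sum', hne, Ne.symm hne,
        Fin.castSucc_inj, Finset.sum_ite_eq']
    have hcard : ∀ t ∈ S, Multiset.card (f t) = k := by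
      intro t ht
      have hsum : ∑ l, t l ≤ k := (Finset.mem_filter.mp ht).2
      simp [hf, map_sum Multiset.card, Nat.add_sub_cancel' hsum]
    calc S.card ≤ ((Finset.univ : Finset (Sym (Fin (d+1)) k)).image Sym.toMultiset).card := by
          apply Finset.card_le_card_of_injOn f
          · intro t ht
            exact Finset.mem_image.mpr ⟨⟨f t, hcard t ht⟩, Finset.mem_univ _, rfl⟩
          · intro t₁ h₁ t₂ h₂ heq
            funext l
            rw [← hcount t₁ l, ← hcount t₂ l, heq]
      _ ≤ (Finset.univ : Finset (Sym (Fin (d+1)) k)).card := Finset.card_image_le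
      _ = Fintype.card (Sym (Fin (d+1)) k) := rfl
  rw [Sym.card_sym_eq_multichoose, Nat.multichoose_eq] at key
  simpa [Nat.add_comm, Nat.succ_add_sub_one] using key

theorem entrywise_polynomial_rank_bound (p d k : ℕ)
    (M : Matrix (Fin p) (Fin p) ℝ) (hrank : M.rank = d)
    (P : Polynomial ℝ) (hdeg : P.natDegree ≤ k)
    (N : Matrix (Fin p) (Fin p) ℝ) (hN : ∀ i j, N i j = P.eval (M i j)) :
    N.rank ≤ (k + d).choose k := by
  classical
  -- factorization M i j = ∑ l, u i l * v l j
  have hd : Module.finrank ℝ (Submodule.span ℝ (Set.range M)) = d := by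
    rw [← hrank, Matrix.rank_eq_finrank_span_row]; rfl
  let b : Module.Basis (Fin d) ℝ (Submodule.span ℝ (Set.range M)) :=
    Module.finBasisOfFinrankEq ℝ _ hd
  let v : Fin d → Fin p → ℝ := fun l => (b l : Fin p → ℝ)
  let row : Fin p → Submodule.span ℝ (Set.range M) := fun i =>
    ⟨M i, Submodule.subset_span (Set.mem_range_self i)⟩
  let u : Fin p → Fin d → ℝ := fun i l => b.repr (row i) l
  have hM : ∀ i j, M i j = ∑ l, u i l * v l j := by
    intro i j
    have h := b.sum_repr (row i)
    have h2 := congrArg (fun x : Submodule.span ℝ (Set.range M) => (x : Fin p → ℝ) j) h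
    show (row i : Fin p → ℝ) j = _
    rw [← h2]
    simp only [u, v, Submodule.coe_sum, Finset.sum_apply, Submodule.coe_smul, Pi.smul_apply,
      smul_eq_mul]
  -- rows of N lie in the span of monomials
  have hrow : ∀ i, N i ∈ monoSpan v k := by
    intro i
    have hNi : N i = ∑ m ∈ Finset.range (k+1),
        P.coeff m • (fun j => (∑ l, u i l * v l j) ^ m) := by
      funext j
      rw [hN i j, Polynomial.eval_eq_sum_range' (Nat.lt_succ_of_le hdeg), hM i j]
      simp [mul_comm]
    rw [hNi]
    exact Submodule.sum_mem _ fun m hm => Submodule.smul_mem _ _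
      (monoSpan_mono v (Nat.lt_succ_iff.mp (Finset.mem_range.mp hm))
        (pow_mem_monoSpan v (u i) m))
  -- conclude
  calc N.rank = Module.finrank ℝ (Submodule.span ℝ (Set.range N)) :=
        Matrix.rank_eq_finrank_span_row N
    _ ≤ Module.finrank ℝ (monoSpan v k) := by
        apply Submodule.finrank_mono
        rw [Submodule.span_le]
        rintro x ⟨i, rfl⟩
        exact hrow i
    _ ≤ ((expSet d k).image (mono v)).card := finrank_span_finset_le_card _
    _ ≤ (expSet d k).card := Finset.card_image_le
    _ ≤ (k + d).choose k := card_exponents d k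
end

section
/- Let g ~ N(0, I_{2n-1}), let ζ ∈ {-1,1}^n be an independent i.i.d. Rademacher vector, and let T be the n×n Toeplitz matrix with T_{i,j} = g_{i-j+n}. Fix two distinct rows ξ, ξ' of T and fixed nonzero vectors x, y ∈ ℝ^n. Define X = sign⟨ξ⊙ζ, x⟩, X' = sign⟨ξ'⊙ζ, x⟩, Y = sign⟨ξ⊙ζ, y⟩, Y' = sign⟨ξ'⊙ζ, y⟩. Then each of the pairs (X,X'), (X,Y'), (Y,X'), (Y,Y') is independent. -/
open MeasureTheory ProbabilityTheory

noncomputable def sgn (t : ℝ) : ℝ := if 0 ≤ t then 1 else -1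

def toepIdx (n : ℕ) (i j : Fin n) : Fin (2 * n - 1) :=
  ⟨i.val + (n - 1) - j.val, by have := i.isLt; have := j.isLt; omega⟩

noncomputable def rademacher : Measure ℝ :=
  (1/2 : ENNReal) • Measure.dirac (1 : ℝ) + (1/2 : ENNReal) • Measure.dirac (-1 : ℝ)

lemma sgn_pm (t : ℝ) : sgn t = 1 ∨ sgn t = -1 := by
  unfold sgn; split <;> simp

lemma sgn_eq_one_iff (t : ℝ) : sgn t = 1 ↔ 0 ≤ t := by
  by_cases h : 0 ≤ t <;> norm_num [sgn, h]

lemma measurable_sgn : Measurable sgn := by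
  unfold sgn
  exact Measurable.ite measurableSet_Ici measurable_const measurable_const

instance : IsProbabilityMeasure rademacher := by
  constructor
  simp [rademacher]

  rw [ENNReal.inv_two_add_inv_two]

lemma rademacher_map_neg : rademacher.map (fun x : ℝ => -x) = rademacher := by
  unfold rademacher
  rw [Measure.map_add _ _ measurable_neg, Measure.map_smul, Measure.map_smul,
    Measure.map_dirac' measurable_neg, Measure.map_dirac' measurable_neg]
  simp [add_comm]

lemma rademacher_pm : rademacher ({1, -1} : Set ℝ) = 1 := by
  unfold rademacher
  simp [Measure.dirac_apply' _ (by measurability : MeasurableSet ({1, -1} : Set ℝ))]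

  rw [ENNReal.inv_two_add_inv_two]

lemma gaussianReal_map_pm {c : ℝ} (hc : c = 1 ∨ c = -1) :
    (gaussianReal 0 1).map (fun x => c * x) = gaussianReal 0 1 := by
  rw [show (fun x => c * x) = (c * ·) by rfl, gaussianReal_map_const_mul]
  have h2 : c ^ 2 = 1 := by rcases hc with h | h <;> rw [h] <;> norm_num
  congr 1
  · ring
  · ext; simp [h2]

lemma rademacher_map_pm {c : ℝ} (hc : c = 1 ∨ c = -1) :
    rademacher.map (fun x => c * x) = rademacher := by
  rcases hc with h | h <;> subst h
  · simp
  · simpa [neg_mul, one_mul] using rademacher_map_neg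

lemma measurePreserving_flip_pi {ι : Type*} [Fintype ι] (m : ι → Measure ℝ)
    [∀ i, IsProbabilityMeasure (m i)] (ε : ι → ℝ)
    (hmap : ∀ i, (m i).map (fun x => ε i * x) = m i) :
    MeasurePreserving (fun v : ι → ℝ => fun i => ε i * v i)
      (Measure.pi m) (Measure.pi m) :=
  measurePreserving_pi m m (fun i => ⟨(measurable_id.const_mul (ε i)), hmap i⟩)

lemma prod_compl_right {Ωp : Type*} [MeasurableSpace Ωp] (π : Measure Ωp)
    [IsProbabilityMeasure π] {C D : Set Ωp} (hC : MeasurableSet C) (hD : MeasurableSet D)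
    (h : π (C ∩ D) = π C * π D) : π (C ∩ Dᶜ) = π C * π Dᶜ := by
  have h1 : π (C ∩ D) + π (C \ D) = π C := measure_inter_add_diff C hD
  have h2 : π C * π D + π C * π Dᶜ = π C := by
    rw [← mul_add, prob_add_prob_compl hD, mul_one]
  have h3 : π C * π D + π (C \ D) = π C := by rw [← h]; exact h1
  have h4 : π C * π D + π (C \ D) = π C * π D + π C * π Dᶜ := h3.trans h2.symm
  have hfin : π C * π D ≠ ⊤ := (ENNReal.mul_lt_top (measure_lt_top π _) (measure_lt_top π _)).ne
  rw [Set.diff_eq] at h4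
  exact (ENNReal.add_right_inj hfin).mp h4

lemma indepFun_of_pm {Ωp : Type*} [MeasurableSpace Ωp] (π : Measure Ωp)
    [IsProbabilityMeasure π] (X X' : Ωp → ℝ) (A B : Set Ωp)
    (hXv : ∀ ω, X ω = 1 ∨ X ω = -1) (hX'v : ∀ ω, X' ω = 1 ∨ X' ω = -1)
    (hA : MeasurableSet A) (hB : MeasurableSet B)
    (hAX : ∀ ω, X ω = 1 ↔ ω ∈ A) (hBX : ∀ ω, X' ω = 1 ↔ ω ∈ B)
    (h : π (A ∩ B) = π A * π B) : IndepFun X X' π := by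
  classical
  have fAB := h
  have fABc : π (A ∩ Bᶜ) = π A * π Bᶜ := prod_compl_right π hA hB h
  have fAcB : π (Aᶜ ∩ B) = π Aᶜ * π B := by
    rw [Set.inter_comm, mul_comm]
    exact prod_compl_right π hB hA (by rw [Set.inter_comm, mul_comm] at h; exact h)
  have fAcBc : π (Aᶜ ∩ Bᶜ) = π Aᶜ * π Bᶜ := prod_compl_right π hA.compl hB fAcB
  rw [indepFun_iff_measure_inter_preimage_eq_mul]
  intro s t _ _
  have hpre : ∀ (Z : Ωp → ℝ) (C : Set Ωp), (∀ ω, Z ω = 1 ∨ Z ω = -1) →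
      (∀ ω, Z ω = 1 ↔ ω ∈ C) → ∀ (u : Set ℝ),
      Z ⁻¹' u = if (1:ℝ) ∈ u then (if (-1:ℝ) ∈ u then Set.univ else C)
        else (if (-1:ℝ) ∈ u then Cᶜ else ∅) := by
    intro Z C hZv hZC u
    ext ω
    rcases hZv ω with hz | hz
    · have hc : ω ∈ C := (hZC ω).mp hz
      split_ifs with h1 h2 h2 <;>
        simp [Set.mem_preimage, hz, h1, h2, hc]
    · have hc : ω ∉ C := fun hmem => by
        have := (hZC ω).mpr hmem; rw [hz] at this; norm_num at this
      split_ifs with h1 h2 h2 <;>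
        simp [Set.mem_preimage, hz, h1, h2, hc]
  rw [hpre X A hXv hAX s, hpre X' B hX'v hBX t]
  have fBAc : π (B ∩ Aᶜ) = π B * π Aᶜ := by rw [Set.inter_comm, fAcB, mul_comm]
  have fBA : π (B ∩ A) = π B * π A := by rw [Set.inter_comm, fAB, mul_comm]
  have fBcA : π (Bᶜ ∩ A) = π Bᶜ * π A := by rw [Set.inter_comm, fABc, mul_comm]
  have fBcAc : π (Bᶜ ∩ Aᶜ) = π Bᶜ * π Aᶜ := by rw [Set.inter_comm, fAcBc, mul_comm]
  split_ifs <;>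
    simp [fAB, fABc, fAcB, fAcBc, fBAc, fBA, fBcA, fBcAc, Set.inter_comm, measure_univ, mul_comm]

lemma indepFun_comp_of_map {Ω P : Type*} [MeasurableSpace Ω] [MeasurableSpace P]
    {μ : Measure Ω} {G : Ω → P} (hG : Measurable G) {π : Measure P}
    (hmap : μ.map G = π) {f h : P → ℝ} (hf : Measurable f) (hh : Measurable h)
    (hind : IndepFun f h π) : IndepFun (fun ω => f (G ω)) (fun ω => h (G ω)) μ := by
  rw [indepFun_iff_measure_inter_preimage_eq_mul] at hind ⊢
  intro s t hs ht
  have e1 : (fun ω => f (G ω)) ⁻¹' s = G ⁻¹' (f ⁻¹' s) := rfl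
  have e2 : (fun ω => h (G ω)) ⁻¹' t = G ⁻¹' (h ⁻¹' t) := rfl
  rw [e1, e2, ← Set.preimage_inter, ← Measure.map_apply hG ((hf hs).inter (hh ht)),
    ← Measure.map_apply hG (hf hs), ← Measure.map_apply hG (hh ht), hmap]
  exact hind s t hs ht

lemma pi_hyperplane_null {ι κ : Type*} [Fintype ι] [Fintype κ] [DecidableEq ι] [DecidableEq κ]
    (ms : κ → Measure ℝ) [∀ k, IsProbabilityMeasure (ms k)]
    (d : ι → ℝ) (k : ι → κ) (hk : Function.Injective k)
    (j0 : ι) (hd : d j0 ≠ 0) (habs : ms (k j0) ≪ volume) :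
    Measure.pi ms {v | ∑ j, d j * v (k j) = 0} = 0 := by
  classical
  set k0 := k j0 with hk0
  set p : κ → Prop := fun x => x ≠ k0 with hp
  letI hU : Unique {x // ¬ p x} :=
    ⟨⟨⟨k0, not_not_intro rfl⟩⟩, fun a => Subtype.ext (not_not.mp a.2)⟩
  set e := MeasurableEquiv.piEquivPiSubtypeProd (fun _ : κ => ℝ) p with he
  have hmp := measurePreserving_piEquivPiSubtypeProd ms p
  set S : Set (κ → ℝ) := {v | ∑ j, d j * v (k j) = 0} with hSdef
  have hmeasS : MeasurableSet S := by
    have hm : Measurable fun v : κ → ℝ => ∑ j, d j * v (k j) :=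
      Finset.measurable_sum _ (fun j _ => (measurable_pi_apply (k j)).const_mul _)
    exact hm (measurableSet_singleton 0)
  set T : Set ((∀ i : Subtype p, ℝ) × (∀ i : {x // ¬ p x}, ℝ)) := e.symm ⁻¹' S with hT
  have hmeasT : MeasurableSet T := e.symm.measurable hmeasS
  have hpre : e ⁻¹' T = S := by
    rw [hT, ← Set.preimage_comp]
    simp
  have key : Measure.pi ms S =
      ((Measure.pi fun i : Subtype p => ms i).prod (Measure.pi fun i : {x // ¬ p x} => ms i)) T := by
    rw [← hmp.map_eq, Measure.map_apply hmp.measurable hmeasT, hpre]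
  rw [key, Measure.measure_prod_null hmeasT]
  refine Filter.Eventually.of_forall (fun f => ?_)
  set C : ℝ := ∑ j ∈ Finset.univ.erase j0, d j * (if hj : p (k j) then f ⟨k j, hj⟩ else 0) with hC
  have hkey : ∀ h : (∀ i : {x // ¬ p x}, ℝ),
      ∑ j, d j * (e.symm (f, h)) (k j) = C + d j0 * h default := by
    intro h
    rw [← Finset.sum_erase_add _ _ (Finset.mem_univ j0)]
    congr 1
    · rw [hC]
      refine Finset.sum_congr rfl (fun j hj => ?_)
      have hjne : j ≠ j0 := Finset.ne_of_mem_erase hj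
      have hpj : p (k j) := fun hcontra => hjne (hk hcontra)
      rw [dif_pos hpj]
      congr 1
      simp [he, Equiv.piEquivPiSubtypeProd_symm_apply, dif_pos hpj]
    · have hpj0 : ¬ p (k j0) := not_not_intro rfl
      have : (e.symm (f, h)) (k j0) = h ⟨k j0, hpj0⟩ := by
        simp [he, Equiv.piEquivPiSubtypeProd_symm_apply, dif_neg hpj0]
      rw [this]
      have hde : (⟨k j0, hpj0⟩ : {x // ¬ p x}) = default := Subtype.ext rfl
      rw [hde]
  have hsub : (Prod.mk f ⁻¹' T) ⊆ {h | h default = -C / d j0} := by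
    intro h hh
    have : ∑ j, d j * (e.symm (f, h)) (k j) = 0 := hh
    rw [hkey h] at this
    have : d j0 * h default = -C := by linarith
    show h default = -C / d j0
    rw [eq_div_iff hd]
    linarith
  refine measure_mono_null hsub ?_
  have heq : {h : (∀ i : {x // ¬ p x}, ℝ) | h default = -C / d j0} =
      (MeasurableEquiv.piUnique (fun _ : {x // ¬ p x} => ℝ)) ⁻¹' {-C / d j0} := rfl
  rw [heq, (measurePreserving_piUnique (fun i : {x // ¬ p x} => ms i)).measure_preimage
    (measurableSet_singleton _).nullMeasurableSet]
  have hdef : ((default : {x // ¬ p x}) : κ) = k0 := rfl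
  have : ms k0 {-C / d j0} = 0 := by
    rw [hk0]
    exact habs (Real.volume_singleton)
  simpa [hdef] using this


lemma core {n : ℕ} {Ω : Type*} [MeasurableSpace Ω] (μ : Measure Ω) [IsProbabilityMeasure μ]
    (g : Ω → (Fin (2 * n - 1) → ℝ)) (ζ : Ω → (Fin n → ℝ))
    (hg : Measurable g) (hζ : Measurable ζ)
    (hglaw : μ.map g = Measure.pi (fun _ => gaussianReal 0 1))
    (hζlaw : μ.map ζ = Measure.pi (fun _ => rademacher))
    (hindep : IndepFun g ζ μ)
    (u c : Fin n → ℝ) (hc : c ≠ 0) (p q : Fin n) (hpq : q.val < p.val) :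
    IndepFun (fun ω => sgn (∑ j, g ω (toepIdx n p j) * ζ ω j * u j))
      (fun ω => sgn (∑ j, g ω (toepIdx n q j) * ζ ω j * c j)) μ := by
  classical
  have hn : 0 < n := p.pos
  set ν : Measure (Fin (2 * n - 1) → ℝ) := Measure.pi (fun _ => gaussianReal 0 1) with hν
  set ρM : Measure (Fin n → ℝ) := Measure.pi (fun _ => rademacher) with hρM
  set π : Measure ((Fin (2 * n - 1) → ℝ) × (Fin n → ℝ)) := ν.prod ρM with hπ
  haveI : IsProbabilityMeasure π := by rw [hπ]; infer_instance
  set F : (Fin (2 * n - 1) → ℝ) × (Fin n → ℝ) → ℝ :=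
    fun z => ∑ j, z.1 (toepIdx n p j) * z.2 j * u j with hF
  set H : (Fin (2 * n - 1) → ℝ) × (Fin n → ℝ) → ℝ :=
    fun z => ∑ j, z.1 (toepIdx n q j) * z.2 j * c j with hH
  have hFm : Measurable F := by
    rw [hF]
    exact Finset.measurable_sum _ (fun j _ => by fun_prop)
  have hHm : Measurable H := by
    rw [hH]
    exact Finset.measurable_sum _ (fun j _ => by fun_prop)
  have hjoint : μ.map (fun ω => (g ω, ζ ω)) = π := by
    rw [hπ, show ν = μ.map g from hglaw.symm, show ρM = μ.map ζ from hζlaw.symm]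
    exact (indepFun_iff_map_prod_eq_prod_map_map hg.aemeasurable hζ.aemeasurable).mp hindep
  -- the sign-flip data
  set e : ℕ := p.val - q.val with hedef
  have he : 0 < e := by omega
  set ρs : Fin n → ℝ := fun j => (-1 : ℝ) ^ (j.val / e) with hρs
  set τ : Fin (2 * n - 1) → ℝ := fun k =>
    if p.val ≤ k.val then (-1 : ℝ) ^ ((p.val + n - 1 - k.val) / e)
    else -((-1 : ℝ) ^ ((q.val + n - 1 - k.val) / e)) with hτ
  have hpow : ∀ t : ℕ, (-1 : ℝ) ^ t = 1 ∨ (-1 : ℝ) ^ t = -1 := by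
    intro t
    rcases Nat.even_or_odd t with h | h
    · left; exact h.neg_one_pow
    · right; exact h.neg_one_pow
  have hsq : ∀ t : ℕ, (-1 : ℝ) ^ t * (-1 : ℝ) ^ t = 1 := by
    intro t; rw [← pow_add]; exact (Even.add_self _).neg_one_pow
  have hρpm : ∀ j, ρs j = 1 ∨ ρs j = -1 := fun j => hpow _
  have hτpm : ∀ k, τ k = 1 ∨ τ k = -1 := by
    intro k
    rw [hτ]
    dsimp only
    split_ifs
    · exact hpow _
    · rcases hpow ((q.val + n - 1 - k.val) / e) with h | h
      · right; rw [h]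
      · left; rw [h]; norm_num
  have I1 : ∀ j : Fin n, τ (toepIdx n p j) * ρs j = 1 := by
    intro j
    have hjlt := j.isLt
    have hval : (toepIdx n p j).val = p.val + (n - 1) - j.val := rfl
    have h1 : p.val ≤ (toepIdx n p j).val := by rw [hval]; omega
    have h2 : p.val + n - 1 - (toepIdx n p j).val = j.val := by rw [hval]; omega
    have hτv : τ (toepIdx n p j) = (-1 : ℝ) ^ (j.val / e) := by
      rw [hτ]; dsimp only; rw [if_pos h1, h2]
    rw [hτv, hρs]
    exact hsq _
  have I2 : ∀ j : Fin n, τ (toepIdx n q j) * ρs j = -1 := by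
    intro j
    have hjlt := j.isLt
    have hplt := p.isLt
    have hval : (toepIdx n q j).val = q.val + (n - 1) - j.val := rfl
    by_cases h1 : p.val ≤ (toepIdx n q j).val
    · have h2 : p.val + n - 1 - (toepIdx n q j).val = j.val + e := by
        rw [hval] at h1 ⊢; omega
      have hτv : τ (toepIdx n q j) = (-1 : ℝ) ^ (j.val / e + 1) := by
        rw [hτ]; dsimp only; rw [if_pos h1, h2, Nat.add_div_right _ he]
      rw [hτv, hρs, pow_succ]
      dsimp only
      linear_combination -hsq (j.val / e)
    · have h2 : q.val + n - 1 - (toepIdx n q j).val = j.val := by rw [hval]; omega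
      have hτv : τ (toepIdx n q j) = -((-1 : ℝ) ^ (j.val / e)) := by
        rw [hτ]; dsimp only; rw [if_neg h1, h2]
      rw [hτv, hρs]
      dsimp only
      linear_combination -hsq (j.val / e)
  -- flip maps
  set Φ1 : (Fin (2 * n - 1) → ℝ) → (Fin (2 * n - 1) → ℝ) := fun v k => τ k * v k with hΦ1
  set Φ2 : (Fin n → ℝ) → (Fin n → ℝ) := fun w j => ρs j * w j with hΦ2
  have hmp1 : MeasurePreserving Φ1 ν ν := by
    rw [hΦ1, hν]
    exact measurePreserving_flip_pi _ τ (fun k => gaussianReal_map_pm (hτpm k))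
  have hmp2 : MeasurePreserving Φ2 ρM ρM := by
    rw [hΦ2, hρM]
    exact measurePreserving_flip_pi _ ρs (fun j => rademacher_map_pm (hρpm j))
  have hmpΦ : MeasurePreserving (Prod.map Φ1 Φ2) π π := by
    rw [hπ]; exact hmp1.prod hmp2
  have keyF : ∀ z, F (Prod.map Φ1 Φ2 z) = F z := by
    intro z
    rw [hF]
    dsimp only [Prod.map, hΦ1, hΦ2]
    refine Finset.sum_congr rfl (fun j _ => ?_)
    linear_combination (z.1 (toepIdx n p j) * z.2 j * u j) * I1 j
  have keyH : ∀ z, H (Prod.map Φ1 Φ2 z) = - H z := by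
    intro z
    rw [hH]
    dsimp only [Prod.map, hΦ1, hΦ2]
    rw [← Finset.sum_neg_distrib]
    refine Finset.sum_congr rfl (fun j _ => ?_)
    linear_combination (z.1 (toepIdx n q j) * z.2 j * c j) * I2 j
  -- events
  set A : Set ((Fin (2 * n - 1) → ℝ) × (Fin n → ℝ)) := {z | 0 ≤ F z} with hAdef
  set B : Set ((Fin (2 * n - 1) → ℝ) × (Fin n → ℝ)) := {z | 0 ≤ H z} with hBdef
  have hA : MeasurableSet A := measurableSet_le measurable_const hFm
  have hB : MeasurableSet B := measurableSet_le measurable_const hHm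
  have hApre : Prod.map Φ1 Φ2 ⁻¹' A = A := by
    ext z; simp only [Set.mem_preimage, hAdef, Set.mem_setOf_eq, keyF z]
  have hBpre : Prod.map Φ1 Φ2 ⁻¹' B = {z | H z ≤ 0} := by
    ext z
    simp only [Set.mem_preimage, hBdef, Set.mem_setOf_eq, keyH z, neg_nonneg]
  -- the null set
  set N : Set ((Fin (2 * n - 1) → ℝ) × (Fin n → ℝ)) := {z | H z = 0} with hNdef
  have hNm : MeasurableSet N := hHm (measurableSet_singleton 0)
  have hnull : π N = 0 := by
    have hswap : π N = (ρM.prod ν) (Prod.swap ⁻¹' N) := by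
      rw [hπ, ← Measure.prod_swap, Measure.map_apply measurable_swap hNm]
    rw [hswap, Measure.measure_prod_null (measurable_swap hNm)]
    have hwpm_ae : ∀ᵐ w ∂ρM, ∀ j, w j = 1 ∨ w j = -1 := by
      have hGm : MeasurableSet (Set.pi Set.univ (fun _ : Fin n => ({1, -1} : Set ℝ))) :=
        MeasurableSet.univ_pi (fun _ => ((Set.finite_singleton (-1:ℝ)).insert 1).measurableSet)
      have hG1 : ρM (Set.pi Set.univ (fun _ : Fin n => ({1, -1} : Set ℝ))) = 1 := by
        rw [hρM, Measure.pi_pi]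
        simp [rademacher_pm]
      rw [ae_iff]
      have : {w : Fin n → ℝ | ¬ ∀ j, w j = 1 ∨ w j = -1} =
          (Set.pi Set.univ (fun _ : Fin n => ({1, -1} : Set ℝ)))ᶜ := by
        ext w; simp [Set.mem_pi]
      rw [this, measure_compl hGm (measure_ne_top _ _), hG1]
      haveI : IsProbabilityMeasure ρM := by rw [hρM]; infer_instance
      simp
    filter_upwards [hwpm_ae] with w hw
    obtain ⟨j0, hj0⟩ := Function.ne_iff.mp hc
    have hj0' : c j0 ≠ 0 := by simpa using hj0
    have hd : w j0 * c j0 ≠ 0 := by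
      apply mul_ne_zero _ hj0'
      rcases hw j0 with h | h <;> rw [h] <;> norm_num
    have hkinj : Function.Injective (fun j => toepIdx n q j) := by
      intro j1 j2 hj
      have h1 := j1.isLt
      have h2 := j2.isLt
      have := congrArg Fin.val hj
      simp only [toepIdx] at this
      exact Fin.ext (by omega)
    have hmain := pi_hyperplane_null (fun _ : Fin (2 * n - 1) => gaussianReal 0 1)
      (fun j => w j * c j) (fun j => toepIdx n q j) hkinj j0 hd
      (gaussianReal_absolutelyContinuous 0 one_ne_zero)
    have hseteq : (Prod.mk w ⁻¹' (Prod.swap ⁻¹' N)) =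
        {v : Fin (2 * n - 1) → ℝ | ∑ j, (w j * c j) * v (toepIdx n q j) = 0} := by
      ext v
      simp only [Set.mem_preimage, hNdef, Set.mem_setOf_eq, hH]
      constructor <;> intro hv <;>
        [skip; skip] <;>
        · rw [show (∑ j, (w j * c j) * v (toepIdx n q j)) =
            ∑ j, v (toepIdx n q j) * w j * c j from
            Finset.sum_congr rfl (fun j _ => by ring)] at *
          try exact hv
          try assumption
      
    rw [hseteq, hν]
    exact hmain
  -- flip consequences
  have hflip : ∀ C : Set ((Fin (2 * n - 1) → ℝ) × (Fin n → ℝ)), MeasurableSet C →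
      (Prod.map Φ1 Φ2 ⁻¹' C = C) → π (C ∩ B) = π (C ∩ Bᶜ) := by
    intro C hCm hCpre
    have h1 : π (C ∩ B) = π (Prod.map Φ1 Φ2 ⁻¹' (C ∩ B)) :=
      (hmpΦ.measure_preimage ((hCm.inter hB)).nullMeasurableSet).symm
    rw [Set.preimage_inter, hCpre, hBpre] at h1
    rw [h1]
    apply le_antisymm
    · have hsub : C ∩ {z | H z ≤ 0} ⊆ (C ∩ Bᶜ) ∪ N := by
        rintro z ⟨hzC, hz⟩
        by_cases h0 : H z = 0
        · exact Or.inr h0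
        · refine Or.inl ⟨hzC, fun hge => h0 (le_antisymm hz ?_)⟩
          exact hge
      calc π (C ∩ {z | H z ≤ 0}) ≤ π ((C ∩ Bᶜ) ∪ N) := measure_mono hsub
        _ ≤ π (C ∩ Bᶜ) + π N := measure_union_le _ _
        _ = π (C ∩ Bᶜ) := by rw [hnull, add_zero]
    · refine measure_mono (Set.inter_subset_inter_right _ ?_)
      intro z hz
      have : ¬ (0 ≤ H z) := hz
      exact le_of_lt (lt_of_not_ge this)
  have hAB : π (A ∩ B) = π (A ∩ Bᶜ) := hflip A hA hApre
  have hAcB : π (Aᶜ ∩ B) = π (Aᶜ ∩ Bᶜ) := hflip Aᶜ hA.compl (by rw [Set.preimage_compl, hApre])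
  have hBBc : π B = π Bᶜ := by
    have e1 : π (B ∩ A) + π (B \ A) = π B := measure_inter_add_diff (μ := π) B hA
    have e2 : π (Bᶜ ∩ A) + π (Bᶜ \ A) = π Bᶜ := measure_inter_add_diff (μ := π) Bᶜ hA
    rw [Set.diff_eq] at e1 e2
    rw [← e1, ← e2, Set.inter_comm B A, Set.inter_comm B Aᶜ,
      Set.inter_comm Bᶜ A, Set.inter_comm Bᶜ Aᶜ, hAB, hAcB]
  have hprod : π (A ∩ B) = π A * π B := by
    have hA2 : π A = π (A ∩ B) + π (A ∩ B) := by
      have h3 := measure_inter_add_diff (μ := π) A hB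
      rw [Set.diff_eq, hAB] at h3
      rw [hAB]
      exact h3.symm
    have h2B : π B + π B = 1 := by
      have h4 := prob_add_prob_compl (μ := π) hB
      rw [← hBBc] at h4
      exact h4
    calc π (A ∩ B) = π (A ∩ B) * (π B + π B) := by rw [h2B, mul_one]
      _ = (π (A ∩ B) + π (A ∩ B)) * π B := by ring
      _ = π A * π B := by rw [← hA2]
  have hindπ : IndepFun (fun z => sgn (F z)) (fun z => sgn (H z)) π := by
    apply indepFun_of_pm π _ _ A B (fun z => sgn_pm _) (fun z => sgn_pm _) hA hB
    · exact fun z => sgn_eq_one_iff (F z)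
    · exact fun z => sgn_eq_one_iff (H z)
    · exact hprod
  exact indepFun_comp_of_map (hg.prodMk hζ) hjoint
    (measurable_sgn.comp hFm) (measurable_sgn.comp hHm) hindπ
theorem toeplitz_pairwise_independence (n : ℕ) (Ω : Type*) [MeasurableSpace Ω]
    (μ : Measure Ω) [IsProbabilityMeasure μ]
    (g : Ω → (Fin (2 * n - 1) → ℝ)) (ζ : Ω → (Fin n → ℝ))
    (hg : Measurable g) (hζ : Measurable ζ)
    (hglaw : μ.map g = Measure.pi (fun _ => gaussianReal 0 1))
    (hζlaw : μ.map ζ = Measure.pi (fun _ => rademacher))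
    (hindep : IndepFun g ζ μ)
    (x y : Fin n → ℝ) (hx : x ≠ 0) (hy : y ≠ 0)
    (i i' : Fin n) (hii' : i ≠ i')
    (X X' Y Y' : Ω → ℝ)
    (hX : X = fun ω => sgn (∑ j, g ω (toepIdx n i j) * ζ ω j * x j))
    (hX' : X' = fun ω => sgn (∑ j, g ω (toepIdx n i' j) * ζ ω j * x j))
    (hY : Y = fun ω => sgn (∑ j, g ω (toepIdx n i j) * ζ ω j * y j))
    (hY' : Y' = fun ω => sgn (∑ j, g ω (toepIdx n i' j) * ζ ω j * y j)) :
    IndepFun X X' μ ∧ IndepFun X Y' μ ∧ IndepFun Y X' μ ∧ IndepFun Y Y' μ := by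
  subst hX hX' hY hY'
  have hne : i.val ≠ i'.val := fun h => hii' (Fin.ext h)
  rcases lt_or_gt_of_ne hne with h | h
  · exact ⟨(core μ g ζ hg hζ hglaw hζlaw hindep x x hx i' i h).symm,
      (core μ g ζ hg hζ hglaw hζlaw hindep y x hx i' i h).symm,
      (core μ g ζ hg hζ hglaw hζlaw hindep x y hy i' i h).symm,
      (core μ g ζ hg hζ hglaw hζlaw hindep y y hy i' i h).symm⟩
  · exact ⟨core μ g ζ hg hζ hglaw hζlaw hindep x x hx i i' h,
      core μ g ζ hg hζ hglaw hζlaw hindep x y hy i i' h,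
      core μ g ζ hg hζ hglaw hζlaw hindep y x hx i i' h,
      core μ g ζ hg hζ hglaw hζlaw hindep y y hy i i' h⟩
end
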